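/- arXiv:2512.08268 — 2 statements merged into one kernel-verified Lean document; each statement's English description precedes it below -/
import Mathlib

section
/- Tensorization of maximum discounted score: for every score function φ, every (possibly partial) function f : X → {0,1} with X ⊆ {0,1}^m, every probability distribution μ on X, every discount factor α ≥ 0, and every integer n ≥ 1, the maximum discounted score of the n-fold direct product under the product distribution equals the n-th power of the maximum discounted score of f: DS_α^{μ^n}(f^n) = (DS_α^μ(f))^n. -/
open Finset

/-- Deterministic decision trees querying coordinates `i : ι` of inputs `x : ι → Bool`,
with leaves labelled by elements of `L`. -/
inductive DTree (ι : Type) (L : Type) : Type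
  | leaf (lab : L) : DTree ι L
  | node (i : ι) (t0 : DTree ι L) (t1 : DTree ι L) : DTree ι L

namespace DTree

variable {ι L : Type}

/-- Output label at the leaf reached by input `x`. -/
def out : DTree ι L → (ι → Bool) → L
  | .leaf lab, _ => lab
  | .node i t0 t1, x => if x i then out t1 x else out t0 x

/-- Number of queries made on input `x` (depth of the leaf reached by `x`). -/
def cost : DTree ι L → (ι → Bool) → ℕ
  | .leaf _, _ => 0
  | .node i t0 t1, x => (if x i then cost t1 x else cost t0 x) + 1

/-- Maximum leaf depth of the tree. -/
def depth : DTree ι L → ℕ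
  | .leaf _ => 0
  | .node _ t0 t1 => max (depth t0) (depth t1) + 1

/-- The set of inputs reaching the same leaf as input `x`. -/
def leafSet : DTree ι L → (ι → Bool) → Set (ι → Bool)
  | .leaf _, _ => Set.univ
  | .node i t0 t1, x => {y | y i = x i} ∩ (if x i then leafSet t1 x else leafSet t0 x)

/-- Every leaf label of the tree satisfies the predicate `P`. -/
def allLabels : DTree ι L → (L → Prop) → Prop
  | .leaf lab, P => P lab
  | .node _ t0 t1, P => allLabels t0 P ∧ allLabels t1 P

end DTree

/-- A randomized query algorithm: a finitely supported probability distribution over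
deterministic decision trees. -/
structure RandAlg (ι : Type) (L : Type) where
  k : ℕ
  p : Fin k → ℝ
  T : Fin k → DTree ι L
  p_nonneg : ∀ j, 0 ≤ p j
  p_sum : ∑ j, p j = 1

/-- A probability distribution on inputs, supported inside the domain `X`. -/
structure InputDist (ι : Type) [Fintype ι] [DecidableEq ι] (X : Set (ι → Bool)) where
  μ : (ι → Bool) → ℝ
  nonneg : ∀ x, 0 ≤ μ x
  sum_one : ∑ x, μ x = 1
  supp : ∀ x, x ∉ X → μ x = 0

/-- A score function `φ : [0,1] → [1/2,1]`. -/
structure ScoreFun where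
  φ : ℝ → ℝ
  continuous : ContinuousOn φ (Set.Icc 0 1)
  half_le : ∀ p ∈ Set.Icc (0:ℝ) 1, 1 / 2 ≤ φ p
  le_one : ∀ p ∈ Set.Icc (0:ℝ) 1, φ p ≤ 1
  map_zero : φ 0 = 1
  map_one : φ 1 = 1
  map_half : φ (1 / 2) = 1 / 2
  symm : ∀ p ∈ Set.Icc (0:ℝ) 1, φ (1 - p) = φ p
  mono : MonotoneOn φ (Set.Icc (1 / 2) 1)

section Defs

variable {ι L : Type} [Fintype ι] [DecidableEq ι]

/-- Mass of a set of inputs under the weight function `μ`. -/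
noncomputable def mass (μ : (ι → Bool) → ℝ) (S : Set (ι → Bool)) : ℝ :=
  ∑ x, Set.indicator S μ x

/-- Score `φ(μ(ℓ₁)/μ(ℓ))` of the leaf `ℓ` reached by `x` in the tree `t`. -/
noncomputable def leafScore (S : ScoreFun) (f : (ι → Bool) → Bool) (μ : (ι → Bool) → ℝ)
    (t : DTree ι L) (x : ι → Bool) : ℝ :=
  S.φ (mass μ (t.leafSet x ∩ {y | f y = true}) / mass μ (t.leafSet x))

/-- Score of a randomized algorithm: `E_{D∼R, x∼μ}[score(D(x))]`. -/
noncomputable def algScore (S : ScoreFun) (f : (ι → Bool) → Bool) (μ : (ι → Bool) → ℝ)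
    (R : RandAlg ι L) : ℝ :=
  ∑ j, R.p j * ∑ x, μ x * leafScore S f μ (R.T j) x

/-- Expected cost `E_{D∼R, x∼μ}[cost(D(x))]`. -/
noncomputable def expCost (μ : (ι → Bool) → ℝ) (R : RandAlg ι L) : ℝ :=
  ∑ j, R.p j * ∑ x, μ x * ((R.T j).cost x : ℝ)

/-- Score-weighted cost `E[score(D(x))·cost(D(x))] / E[score(D(x))]`. -/
noncomputable def scost (S : ScoreFun) (f : (ι → Bool) → Bool) (μ : (ι → Bool) → ℝ)
    (R : RandAlg ι L) : ℝ :=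
  (∑ j, R.p j * ∑ x, μ x * (leafScore S f μ (R.T j) x * ((R.T j).cost x : ℝ))) /
    algScore S f μ R

/-- Discounted score `E[score(D(x))·e^{-α·cost(D(x))}]`. -/
noncomputable def dScore (S : ScoreFun) (f : (ι → Bool) → Bool) (μ : (ι → Bool) → ℝ)
    (α : ℝ) (R : RandAlg ι L) : ℝ :=
  ∑ j, R.p j * ∑ x, μ x *
    (leafScore S f μ (R.T j) x * Real.exp (-(α * ((R.T j).cost x : ℝ))))

/-- Maximum discounted score `DS_α^μ(f)`. -/
noncomputable def DS (S : ScoreFun) (f : (ι → Bool) → Bool) (μ : (ι → Bool) → ℝ)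
    (α : ℝ) : ℝ :=
  ⨆ R : RandAlg ι Unit, dScore S f μ α R

/-- Distributional score-weighted query complexity `sR̄̄_γ^μ(f)`. -/
noncomputable def sRdist (S : ScoreFun) (f : (ι → Bool) → Bool) (μ : (ι → Bool) → ℝ)
    (γ : ℝ) : ℝ :=
  sInf {c | ∃ R : RandAlg ι Unit, γ ≤ algScore S f μ R ∧ scost S f μ R = c}

/-- Distributional query complexity `R̄̄_γ^μ(f)` (expected cost). -/
noncomputable def Rdist (S : ScoreFun) (f : (ι → Bool) → Bool) (μ : (ι → Bool) → ℝ)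
    (γ : ℝ) : ℝ :=
  sInf {c | ∃ R : RandAlg ι Unit, γ ≤ algScore S f μ R ∧ expCost μ R = c}

/-- Maximum score-weighted distributional query complexity `sR̄̄_γ(f)`. -/
noncomputable def sRmax (S : ScoreFun) (X : Set (ι → Bool)) (f : (ι → Bool) → Bool)
    (γ : ℝ) : ℝ :=
  ⨆ μ : InputDist ι X, sRdist S f μ.μ γ

/-- Maximum distributional query complexity `R̄̄_γ(f)`. -/
noncomputable def Rmax (S : ScoreFun) (X : Set (ι → Bool)) (f : (ι → Bool) → Bool)
    (γ : ℝ) : ℝ :=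
  ⨆ μ : InputDist ι X, Rdist S f μ.μ γ

/-- Success-probability score `max{μ(ℓ₀),μ(ℓ₁)}/μ(ℓ)` of the leaf reached by `x`. -/
noncomputable def succLeafScore (f : (ι → Bool) → Bool) (μ : (ι → Bool) → ℝ)
    (t : DTree ι L) (x : ι → Bool) : ℝ :=
  max (mass μ (t.leafSet x ∩ {y | f y = false})) (mass μ (t.leafSet x ∩ {y | f y = true})) /
    mass μ (t.leafSet x)

/-- Success-probability score of a randomized algorithm. -/
noncomputable def succAlgScore (f : (ι → Bool) → Bool) (μ : (ι → Bool) → ℝ)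
    (R : RandAlg ι L) : ℝ :=
  ∑ j, R.p j * ∑ x, μ x * succLeafScore f μ (R.T j) x

/-- Distributional query complexity with the success-probability score. -/
noncomputable def succRdist (f : (ι → Bool) → Bool) (μ : (ι → Bool) → ℝ) (γ : ℝ) : ℝ :=
  sInf {c | ∃ R : RandAlg ι Unit, γ ≤ succAlgScore f μ R ∧ expCost μ R = c}

/-- Maximum distributional query complexity `R̄̄_γ(f)` with the success-probability score. -/
noncomputable def succRmax (X : Set (ι → Bool)) (f : (ι → Bool) → Bool) (γ : ℝ) : ℝ :=
  ⨆ μ : InputDist ι X, succRdist f μ.μ γ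

/-- The fraction `q = μ(ℓ₁)/μ(ℓ)` at the leaf reached by `x`. -/
noncomputable def leafBias (f : (ι → Bool) → Bool) (μ : (ι → Bool) → ℝ)
    (t : DTree ι L) (x : ι → Bool) : ℝ :=
  mass μ (t.leafSet x ∩ {y | f y = true}) / mass μ (t.leafSet x)

/-- Hellinger loss `E[2·√(q(1-q))]` of a randomized algorithm. -/
noncomputable def helLossAlg (f : (ι → Bool) → Bool) (μ : (ι → Bool) → ℝ)
    (R : RandAlg ι L) : ℝ :=
  ∑ j, R.p j * ∑ x, μ x *
    (2 * Real.sqrt (leafBias f μ (R.T j) x * (1 - leafBias f μ (R.T j) x)))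

/-- Hellinger score `E[1 - √(q(1-q))]` of a randomized algorithm. -/
noncomputable def helScoreAlg (f : (ι → Bool) → Bool) (μ : (ι → Bool) → ℝ)
    (R : RandAlg ι L) : ℝ :=
  ∑ j, R.p j * ∑ x, μ x *
    (1 - Real.sqrt (leafBias f μ (R.T j) x * (1 - leafBias f μ (R.T j) x)))

/-- `R̄̄_{Hel↓,ε}(f)`: maximum distributional complexity at Hellinger loss `ε`. -/
noncomputable def RmaxHelLoss (X : Set (ι → Bool)) (f : (ι → Bool) → Bool) (ε : ℝ) : ℝ :=
  ⨆ μ : InputDist ι X,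
    sInf {c | ∃ R : RandAlg ι Unit, helLossAlg f μ.μ R ≤ ε ∧ expCost μ.μ R = c}

/-- `R̄̄_{Hel,γ}(f)`: maximum distributional complexity at Hellinger score `γ`. -/
noncomputable def RmaxHel (X : Set (ι → Bool)) (f : (ι → Bool) → Bool) (γ : ℝ) : ℝ :=
  ⨆ μ : InputDist ι X,
    sInf {c | ∃ R : RandAlg ι Unit, γ ≤ helScoreAlg f μ.μ R ∧ expCost μ.μ R = c}

/-- Binary entropy function. -/
noncomputable def binEnt (p : ℝ) : ℝ :=
  -(p * Real.logb 2 p) - (1 - p) * Real.logb 2 (1 - p)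

/-- Exponential-entropy score `E[1 - (1/2)·2^{-h(q)}]` of a randomized algorithm. -/
noncomputable def entScoreAlg (f : (ι → Bool) → Bool) (μ : (ι → Bool) → ℝ)
    (R : RandAlg ι L) : ℝ :=
  ∑ j, R.p j * ∑ x, μ x *
    (1 - (1 / 2) * (2:ℝ) ^ (-(binEnt (leafBias f μ (R.T j) x))))

/-- `R̄̄_{Ent,γ}(f)`: maximum distributional complexity at exponential-entropy score `γ`. -/
noncomputable def RmaxEnt (X : Set (ι → Bool)) (f : (ι → Bool) → Bool) (γ : ℝ) : ℝ :=
  ⨆ μ : InputDist ι X,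
    sInf {c | ∃ R : RandAlg ι Unit, γ ≤ entScoreAlg f μ.μ R ∧ expCost μ.μ R = c}

end Defs

section WorstCase

variable {ι L : Type}

open Classical in
/-- Worst-case randomized query complexity for a generic task: minimum, over randomized
algorithms whose leaf labels satisfy `labelOK` and which on every input `x ∈ X` output a
label `z` with `good x z` with probability at least `δ`, of the maximum leaf depth over
the trees in the support. -/
noncomputable def RwcTask (X : Set (ι → Bool)) (good : (ι → Bool) → L → Prop)
    (labelOK : L → Prop) (δ : ℝ) : ℕ :=
  sInf {d : ℕ | ∃ R : RandAlg ι L,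
    (∀ j, R.p j ≠ 0 → (R.T j).allLabels labelOK) ∧
    (∀ x ∈ X, δ ≤ ∑ j, if good x ((R.T j).out x) then R.p j else 0) ∧
    ∀ j, R.p j ≠ 0 → (R.T j).depth ≤ d}

/-- Worst-case randomized query complexity `R_δ(f)` of a (partial) Boolean function. -/
noncomputable def Rwc (X : Set (ι → Bool)) (f : (ι → Bool) → Bool) (δ : ℝ) : ℕ :=
  RwcTask X (fun x b => b = f x) (fun _ : Bool => True) δ

end WorstCase

section Product

variable {m n : ℕ} {L : Type}

/-- The `i`-th block of an input to the `n`-fold direct product. -/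
def block (x : Fin n × Fin m → Bool) (i : Fin n) : Fin m → Bool := fun j => x (i, j)

/-- The product domain `Xⁿ`. -/
def Xpow (n : ℕ) (X : Set (Fin m → Bool)) : Set (Fin n × Fin m → Bool) :=
  {x | ∀ i, block x i ∈ X}

/-- The `n`-fold direct product `fⁿ`. -/
def fpow (f : (Fin m → Bool) → Bool) (x : Fin n × Fin m → Bool) : Fin n → Bool :=
  fun i => f (block x i)

/-- The product distribution `μⁿ`. -/
noncomputable def prodMu (μ : (Fin m → Bool) → ℝ) (x : Fin n × Fin m → Bool) : ℝ :=
  ∏ i, μ (block x i)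

/-- The `i`-th factor `ℓ^(i)` of the (product) leaf reached by `x` in a decision tree for `fⁿ`. -/
def blockSet (t : DTree (Fin n × Fin m) L) (x : Fin n × Fin m → Bool) (i : Fin n) :
    Set (Fin m → Bool) :=
  {y | (fun q : Fin n × Fin m => if q.1 = i then y q.2 else x q) ∈ t.leafSet x}

/-- Score of a leaf of a tree for `fⁿ` under `μⁿ`: the product of the scores of its factors. -/
noncomputable def prodLeafScore (S : ScoreFun) (f : (Fin m → Bool) → Bool)
    (μ : (Fin m → Bool) → ℝ) (t : DTree (Fin n × Fin m) L) (x : Fin n × Fin m → Bool) : ℝ :=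
  ∏ i, S.φ (mass μ (blockSet t x i ∩ {y | f y = true}) / mass μ (blockSet t x i))

/-- Score of a randomized algorithm for `fⁿ` under `μⁿ`. -/
noncomputable def algScoreN (S : ScoreFun) (f : (Fin m → Bool) → Bool)
    (μ : (Fin m → Bool) → ℝ) (R : RandAlg (Fin n × Fin m) L) : ℝ :=
  ∑ j, R.p j * ∑ x, prodMu μ x * prodLeafScore S f μ (R.T j) x

/-- Score-weighted cost of a randomized algorithm for `fⁿ` under `μⁿ`. -/
noncomputable def scostN (S : ScoreFun) (f : (Fin m → Bool) → Bool)
    (μ : (Fin m → Bool) → ℝ) (R : RandAlg (Fin n × Fin m) L) : ℝ :=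
  (∑ j, R.p j * ∑ x, prodMu μ x * (prodLeafScore S f μ (R.T j) x * ((R.T j).cost x : ℝ))) /
    algScoreN S f μ R

/-- Discounted score of a randomized algorithm for `fⁿ` under `μⁿ`. -/
noncomputable def dScoreN (S : ScoreFun) (f : (Fin m → Bool) → Bool)
    (μ : (Fin m → Bool) → ℝ) (α : ℝ) (R : RandAlg (Fin n × Fin m) L) : ℝ :=
  ∑ j, R.p j * ∑ x, prodMu μ x *
    (prodLeafScore S f μ (R.T j) x * Real.exp (-(α * ((R.T j).cost x : ℝ))))

/-- Maximum discounted score `DS_α^{μⁿ}(fⁿ)`. -/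
noncomputable def DSN (S : ScoreFun) (f : (Fin m → Bool) → Bool)
    (μ : (Fin m → Bool) → ℝ) (α : ℝ) (n : ℕ) : ℝ :=
  ⨆ R : RandAlg (Fin n × Fin m) Unit, dScoreN S f μ α R

/-- Distributional score-weighted query complexity `sR̄̄_γ^{μⁿ}(fⁿ)`. -/
noncomputable def sRdistN (S : ScoreFun) (f : (Fin m → Bool) → Bool)
    (μ : (Fin m → Bool) → ℝ) (γ : ℝ) (n : ℕ) : ℝ :=
  sInf {c | ∃ R : RandAlg (Fin n × Fin m) Unit,
    γ ≤ algScoreN S f μ R ∧ scostN S f μ R = c}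

/-- Worst-case randomized query complexity `R_δ(fⁿ)` of computing `fⁿ` exactly. -/
noncomputable def RwcN (X : Set (Fin m → Bool)) (f : (Fin m → Bool) → Bool)
    (n : ℕ) (δ : ℝ) : ℕ :=
  RwcTask (Xpow n X) (fun x z => z = fpow f x) (fun _ : Fin n → Bool => True) δ

/-- Success-probability score `max_z μ(ℓ ∩ (fⁿ)⁻¹(z))/μ(ℓ)` of a leaf of a tree for `fⁿ`
under an arbitrary distribution `μ` on `Xⁿ`. -/
noncomputable def succLeafScoreN (f : (Fin m → Bool) → Bool)
    (μ : (Fin n × Fin m → Bool) → ℝ) (t : DTree (Fin n × Fin m) L)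
    (x : Fin n × Fin m → Bool) : ℝ :=
  (⨆ z : Fin n → Bool, mass μ (t.leafSet x ∩ {y | fpow f y = z})) / mass μ (t.leafSet x)

/-- Success-probability score of a randomized algorithm for `fⁿ`. -/
noncomputable def succAlgScoreN (f : (Fin m → Bool) → Bool)
    (μ : (Fin n × Fin m → Bool) → ℝ) (R : RandAlg (Fin n × Fin m) L) : ℝ :=
  ∑ j, R.p j * ∑ x, μ x * succLeafScoreN f μ (R.T j) x

/-- Score-weighted cost of a randomized algorithm for `fⁿ` (success-probability score). -/
noncomputable def succScostN (f : (Fin m → Bool) → Bool)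
    (μ : (Fin n × Fin m → Bool) → ℝ) (R : RandAlg (Fin n × Fin m) L) : ℝ :=
  (∑ j, R.p j * ∑ x, μ x * (succLeafScoreN f μ (R.T j) x * ((R.T j).cost x : ℝ))) /
    succAlgScoreN f μ R

/-- Maximum score-weighted distributional query complexity `sR̄̄_δ(fⁿ)`
(success-probability score). -/
noncomputable def succSRmaxN (X : Set (Fin m → Bool)) (f : (Fin m → Bool) → Bool)
    (n : ℕ) (δ : ℝ) : ℝ :=
  ⨆ μ : InputDist (Fin n × Fin m) (Xpow n X),
    sInf {c | ∃ R : RandAlg (Fin n × Fin m) Unit,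
      δ ≤ succAlgScoreN f μ.μ R ∧ succScostN f μ.μ R = c}

/-- Worst-case randomized query complexity of the list-decoding task `LD_ℓⁿ ∘ f`. -/
noncomputable def RwcLD (X : Set (Fin m → Bool)) (f : (Fin m → Bool) → Bool)
    (n ℓ : ℕ) (δ : ℝ) : ℕ :=
  RwcTask (Xpow n X) (fun x S => fpow f x ∈ S)
    (fun S : Finset (Fin n → Bool) => S.card = 2 ^ (n - ℓ)) δ

open Classical in
/-- Worst-case randomized query complexity of the threshold task `Thr_kⁿ ∘ f`. -/
noncomputable def RwcThr (X : Set (Fin m → Bool)) (f : (Fin m → Bool) → Bool)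
    (n k : ℕ) (δ : ℝ) : ℕ :=
  RwcTask (Xpow n X)
    (fun x z => k ≤ (Finset.univ.filter fun i => z i = fpow f x i).card)
    (fun _ : Fin n → Bool => True) δ

open Classical in
/-- Worst-case randomized query complexity of the labelled threshold task `Label_kⁿ ∘ f`. -/
noncomputable def RwcLabel (X : Set (Fin m → Bool)) (f : (Fin m → Bool) → Bool)
    (n k : ℕ) (δ : ℝ) : ℕ :=
  RwcTask (Xpow n X)
    (fun x z => ∀ i b, z i = some b → fpow f x i = b)
    (fun z : Fin n → Option Bool =>
      (Finset.univ.filter fun i => (z i).isSome).card = k) δ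

end Product

/-!
Both sides are suprema over deterministic trees, because a discounted score is linear in the
randomized algorithm. Running an optimal tree for `f` on every block gives `≥`: weight, leaf score
and discount all factor over the blocks. For `≤`, induct on a tree for `fⁿ`, proving
`value(ν₁ ⊗ ⋯ ⊗ νₙ) ≤ ∏ᵢ M(νᵢ)` for arbitrary unnormalized block weights `νᵢ`, where `M(ν)` is
the best value of a tree for `f` under `ν`. A query to bit `j` of block `i` replaces `νᵢ` by its
two restrictions `νᵢ|{x_j = b}`, costs a factor `e^{-α}`, and the induction closes because
`e^{-α} (M(ν|{x_j = 0}) + M(ν|{x_j = 1})) ≤ M(ν)`.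
-/

section Mass

variable {ι : Type} [Fintype ι] [DecidableEq ι] {ν : (ι → Bool) → ℝ}

lemma mass_nonneg (hν : ∀ x, 0 ≤ ν x) (A : Set (ι → Bool)) : 0 ≤ mass ν A :=
  sum_nonneg fun x _ => Set.indicator_nonneg (fun y _ => hν y) x

lemma mass_mono (hν : ∀ x, 0 ≤ ν x) {A B : Set (ι → Bool)} (h : A ⊆ B) :
    mass ν A ≤ mass ν B :=
  sum_le_sum fun x _ => Set.indicator_le_indicator_of_subset h (fun y => hν y) x

lemma mass_indicator (A B : Set (ι → Bool)) : mass (A.indicator ν) B = mass ν (B ∩ A) := by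
  simp only [mass, Set.indicator_indicator]

lemma mass_div_mass_mem_Icc (hν : ∀ x, 0 ≤ ν x) {A B : Set (ι → Bool)} (h : A ⊆ B) :
    mass ν A / mass ν B ∈ Set.Icc (0 : ℝ) 1 :=
  ⟨div_nonneg (mass_nonneg hν A) (mass_nonneg hν B),
    div_le_one_of_le₀ (mass_mono hν h) (mass_nonneg hν B)⟩

end Mass

lemma ScoreFun.nonneg (S : ScoreFun) {p : ℝ} (hp : p ∈ Set.Icc (0 : ℝ) 1) : 0 ≤ S.φ p :=
  (by norm_num : (0 : ℝ) ≤ 1 / 2).trans (S.half_le p hp)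

lemma exp_neg_mul_natCast_le_one {α : ℝ} (hα : 0 ≤ α) (c : ℕ) : Real.exp (-(α * c)) ≤ 1 :=
  Real.exp_le_one_iff.2 (neg_nonpos.2 (mul_nonneg hα c.cast_nonneg))

namespace DTree

variable {ι L : Type}

lemma mem_leafSet_self (t : DTree ι L) (x : ι → Bool) : x ∈ t.leafSet x := by
  induction t with
  | leaf => exact Set.mem_univ x
  | node i t0 t1 ih0 ih1 => cases h : x i <;> simp [leafSet, h, ih0, ih1]

lemma leafSet_node_of_eq {j : ι} {b : Bool} {x : ι → Bool} (hb : x j = b) (t0 t1 : DTree ι L) :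
    (node j t0 t1).leafSet x = (if b then t1 else t0).leafSet x ∩ {y | y j = b} := by
  rw [leafSet, Set.inter_comm, hb]
  cases b <;> rfl

lemma cost_node_of_eq {j : ι} {b : Bool} {x : ι → Bool} (hb : x j = b) (t0 t1 : DTree ι L) :
    (node j t0 t1).cost x = (if b then t1 else t0).cost x + 1 := by
  rw [cost, hb]
  cases b <;> rfl

instance [Nonempty L] : Nonempty (DTree ι L) :=
  ⟨.leaf (Classical.arbitrary L)⟩

end DTree

section TreeValue

open DTree

variable {ι L : Type} [Fintype ι] [DecidableEq ι] (S : ScoreFun) (f : (ι → Bool) → Bool) (α : ℝ)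
  {ν : (ι → Bool) → ℝ}

lemma leafScore_mem_Icc (hν : ∀ x, 0 ≤ ν x) (t : DTree ι L) (x : ι → Bool) :
    leafScore S f ν t x ∈ Set.Icc (0 : ℝ) 1 :=
  have hq := mass_div_mass_mem_Icc hν Set.inter_subset_left
  ⟨S.nonneg hq, S.le_one _ hq⟩

/-- The weight `ν` need not be normalized: restricting it to a subcube then plays the role of
conditioning on the answers to the queries. -/
noncomputable def treeValue (ν : (ι → Bool) → ℝ) (t : DTree ι L) : ℝ :=
  ∑ x, ν x * (leafScore S f ν t x * Real.exp (-(α * (t.cost x : ℝ))))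

lemma dScore_eq_sum_treeValue (ν : (ι → Bool) → ℝ) (R : RandAlg ι L) :
    dScore S f ν α R = ∑ j, R.p j * treeValue S f α ν (R.T j) :=
  rfl

lemma treeValue_nonneg (hν : ∀ x, 0 ≤ ν x) (t : DTree ι L) : 0 ≤ treeValue S f α ν t :=
  sum_nonneg fun x _ =>
    mul_nonneg (hν x) (mul_nonneg (leafScore_mem_Icc S f hν t x).1 (Real.exp_pos _).le)

lemma treeValue_le_sum (hα : 0 ≤ α) (hν : ∀ x, 0 ≤ ν x) (t : DTree ι L) :
    treeValue S f α ν t ≤ ∑ x, ν x :=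
  sum_le_sum fun x _ => mul_le_of_le_one_right (hν x) <|
    mul_le_one₀ (leafScore_mem_Icc S f hν t x).2 (Real.exp_pos _).le
      (exp_neg_mul_natCast_le_one hα _)

lemma leafScore_indicator_of_eq {j : ι} {b : Bool} {x : ι → Bool} (hb : x j = b)
    (t0 t1 : DTree ι L) :
    leafScore S f ({y | y j = b}.indicator ν) (if b then t1 else t0) x =
      leafScore S f ν (node j t0 t1) x := by
  rw [leafScore, leafScore, mass_indicator, mass_indicator, leafSet_node_of_eq hb,
    Set.inter_right_comm]

lemma treeValue_node (j : ι) (t0 t1 : DTree ι L) :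
    treeValue S f α ν (node j t0 t1) = Real.exp (-α) *
      (treeValue S f α ({y | y j = false}.indicator ν) t0 +
        treeValue S f α ({y | y j = true}.indicator ν) t1) := by
  rw [treeValue, treeValue, treeValue, ← sum_add_distrib, mul_sum]
  refine sum_congr rfl fun x _ => ?_
  cases hb : x j <;>
  · rw [← leafScore_indicator_of_eq S f hb, cost_node_of_eq hb, Nat.cast_succ, mul_add_one,
      neg_add, Real.exp_add]
    simp only [Set.indicator, Set.mem_ofPred_eq, hb, Bool.false_eq_true, Bool.true_eq_false,
      ↓reduceIte, zero_mul, add_zero, zero_add]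
    ring

end TreeValue

section RandAlg

variable {ι L : Type}

def RandAlg.pure (t : DTree ι L) : RandAlg ι L :=
  ⟨1, fun _ => 1, fun _ => t, fun _ => zero_le_one, by simp⟩

instance [Nonempty L] : Nonempty (RandAlg ι L) :=
  ⟨.pure (Classical.arbitrary _)⟩

lemma RandAlg.sum_pure (t : DTree ι L) (V : DTree ι L → ℝ) :
    ∑ j, (RandAlg.pure t).p j * V ((RandAlg.pure t).T j) = V t :=
  (Fin.sum_univ_one _).trans (one_mul _)

lemma RandAlg.sum_le (R : RandAlg ι L) {V : DTree ι L → ℝ} {c : ℝ} (h : ∀ t, V t ≤ c) :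
    ∑ j, R.p j * V (R.T j) ≤ c :=
  calc ∑ j, R.p j * V (R.T j) ≤ ∑ j, R.p j * c :=
        sum_le_sum fun j _ => mul_le_mul_of_nonneg_left (h _) (R.p_nonneg j)
    _ = c := by rw [← sum_mul, R.p_sum, one_mul]

lemma iSup_randAlg_sum_eq_iSup [Nonempty L] (V : DTree ι L → ℝ) (hV : BddAbove (Set.range V)) :
    ⨆ R : RandAlg ι L, ∑ j, R.p j * V (R.T j) = ⨆ t, V t := by
  have hle : ∀ R : RandAlg ι L, ∑ j, R.p j * V (R.T j) ≤ ⨆ t, V t :=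
    fun R => R.sum_le fun t => le_ciSup hV t
  refine le_antisymm (ciSup_le hle) (ciSup_le fun t => ?_)
  rw [← RandAlg.sum_pure t V]
  exact le_ciSup ⟨_, Set.forall_mem_range.2 hle⟩ (RandAlg.pure t)

end RandAlg

section MaxTreeValue

variable {ι : Type} [Fintype ι] [DecidableEq ι] (S : ScoreFun) (f : (ι → Bool) → Bool) (α : ℝ)
  {ν : (ι → Bool) → ℝ}

noncomputable def maxTreeValue (ν : (ι → Bool) → ℝ) : ℝ :=
  ⨆ t : DTree ι Unit, treeValue S f α ν t

variable {α}

lemma bddAbove_range_treeValue (hα : 0 ≤ α) (hν : ∀ x, 0 ≤ ν x) :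
    BddAbove (Set.range (treeValue S f α ν : DTree ι Unit → ℝ)) :=
  ⟨_, Set.forall_mem_range.2 (treeValue_le_sum S f α hα hν)⟩

lemma treeValue_le_maxTreeValue (hα : 0 ≤ α) (hν : ∀ x, 0 ≤ ν x) (t : DTree ι Unit) :
    treeValue S f α ν t ≤ maxTreeValue S f α ν :=
  le_ciSup (bddAbove_range_treeValue S f hα hν) t

lemma maxTreeValue_nonneg (hα : 0 ≤ α) (hν : ∀ x, 0 ≤ ν x) : 0 ≤ maxTreeValue S f α ν :=
  (treeValue_nonneg S f α hν (.leaf ())).trans (treeValue_le_maxTreeValue S f hα hν _)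

/-- Querying `x j` first and then continuing optimally on each branch is one of the strategies
competing in `maxTreeValue S f α ν`. -/
lemma exp_neg_mul_maxTreeValue_indicator_le (hα : 0 ≤ α) (hν : ∀ x, 0 ≤ ν x) (j : ι) :
    Real.exp (-α) * (maxTreeValue S f α ({y | y j = false}.indicator ν) +
      maxTreeValue S f α ({y | y j = true}.indicator ν)) ≤ maxTreeValue S f α ν := by
  rw [mul_add, maxTreeValue, maxTreeValue, Real.mul_iSup_of_nonneg (Real.exp_pos _).le,
    Real.mul_iSup_of_nonneg (Real.exp_pos _).le]
  refine ciSup_add_ciSup_le fun t0 t1 => ?_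
  rw [← mul_add, ← treeValue_node]
  exact treeValue_le_maxTreeValue S f hα hν _

end MaxTreeValue

section Block

variable {m n : ℕ}

lemma sum_prod_block (g : Fin n → (Fin m → Bool) → ℝ) :
    ∑ x : Fin n × Fin m → Bool, ∏ i, g i (block x i) = ∏ i, ∑ y, g i y := by
  rw [prod_univ_sum, Fintype.piFinset_univ]
  exact (Fintype.sum_equiv (Equiv.curry (Fin n) (Fin m) Bool).symm _ _ fun _ => rfl).symm

lemma block_update_apply (x : Fin n × Fin m → Bool) (i : Fin n) (y : Fin m → Bool) (k : Fin n) :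
    block (fun q => if q.1 = i then y q.2 else x q) k = if k = i then y else block x k := by
  by_cases h : k = i <;> funext j <;> simp [block, h]

end Block

namespace DTree

variable {ι L : Type}

def graft : DTree ι L → DTree ι L → DTree ι L
  | .leaf _, s => s
  | .node j a b, s => .node j (graft a s) (graft b s)

lemma cost_graft (a s : DTree ι L) (x : ι → Bool) :
    (a.graft s).cost x = a.cost x + s.cost x := by
  induction a with
  | leaf => simp [graft, cost]
  | node j u v ihu ihv => cases h : x j <;> simp [graft, cost, h, ihu, ihv] <;> omega

lemma leafSet_graft (a s : DTree ι L) (x : ι → Bool) :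
    (a.graft s).leafSet x = a.leafSet x ∩ s.leafSet x := by
  induction a with
  | leaf => simp [graft, leafSet]
  | node j u v ihu ihv => cases h : x j <;> simp [graft, leafSet, h, ihu, ihv, Set.inter_assoc]

variable {m n : ℕ}

def liftBlock (i : Fin n) : DTree (Fin m) L → DTree (Fin n × Fin m) L
  | .leaf l => .leaf l
  | .node j a b => .node (i, j) (liftBlock i a) (liftBlock i b)

lemma cost_liftBlock (i : Fin n) (t : DTree (Fin m) L) (x : Fin n × Fin m → Bool) :
    (t.liftBlock i).cost x = t.cost (block x i) := by
  induction t with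
  | leaf => rfl
  | node j u v ihu ihv =>
    rw [liftBlock, cost, cost, ihu, ihv]
    rfl

lemma leafSet_liftBlock (i : Fin n) (t : DTree (Fin m) L) (x : Fin n × Fin m → Bool) :
    (t.liftBlock i).leafSet x = {y | block y i ∈ t.leafSet (block x i)} := by
  induction t with
  | leaf => simp [liftBlock, leafSet]
  | node j u v ihu ihv =>
    ext y
    cases h : x (i, j) <;> simp [liftBlock, leafSet, h, ihu, ihv, block]

def prodTreeOn (t : Fin n → DTree (Fin m) Unit) : List (Fin n) → DTree (Fin n × Fin m) Unit
  | [] => .leaf ()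
  | i :: l => ((t i).liftBlock i).graft (prodTreeOn t l)

def prodTree (t : Fin n → DTree (Fin m) Unit) : DTree (Fin n × Fin m) Unit :=
  prodTreeOn t (List.finRange n)

lemma cost_prodTreeOn (t : Fin n → DTree (Fin m) Unit) (l : List (Fin n))
    (x : Fin n × Fin m → Bool) :
    (prodTreeOn t l).cost x = (l.map fun i => (t i).cost (block x i)).sum := by
  induction l with
  | nil => rfl
  | cons i l ih => simp [prodTreeOn, cost_graft, cost_liftBlock, ih]

lemma leafSet_prodTreeOn (t : Fin n → DTree (Fin m) Unit) (l : List (Fin n))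
    (x : Fin n × Fin m → Bool) :
    (prodTreeOn t l).leafSet x = {y | ∀ i ∈ l, block y i ∈ (t i).leafSet (block x i)} := by
  induction l with
  | nil => simp [prodTreeOn, leafSet]
  | cons i l ih =>
    ext y
    simp [prodTreeOn, leafSet_graft, leafSet_liftBlock, ih]

lemma cost_prodTree (t : Fin n → DTree (Fin m) Unit) (x : Fin n × Fin m → Bool) :
    (prodTree t).cost x = ∑ i, (t i).cost (block x i) :=
  (cost_prodTreeOn t _ x).trans (Fin.sum_univ_def _).symm

lemma blockSet_prodTree (t : Fin n → DTree (Fin m) Unit) (x : Fin n × Fin m → Bool) (i : Fin n) :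
    blockSet (prodTree t) x i = (t i).leafSet (block x i) := by
  ext y
  simp only [blockSet, prodTree, leafSet_prodTreeOn, List.mem_finRange, forall_const,
    Set.mem_ofPred_eq, block_update_apply]
  refine ⟨fun h => by simpa using h i, fun hy k => ?_⟩
  by_cases hk : k = i
  · subst hk
    simpa using hy
  · simpa [hk] using mem_leafSet_self (t k) (block x k)

lemma prodTree_leaf : prodTree (fun _ => .leaf ()) = (.leaf () : DTree (Fin n × Fin m) Unit) := by
  unfold prodTree
  induction List.finRange n with
  | nil => rfl
  | cons _ _ ih => exact ih

end DTree

section ProductValue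

open DTree

variable {m n : ℕ} {L : Type} (S : ScoreFun) (f : (Fin m → Bool) → Bool) (α : ℝ)

noncomputable def prodTerm (ν : Fin n → (Fin m → Bool) → ℝ) (t : DTree (Fin n × Fin m) L)
    (x : Fin n × Fin m → Bool) : ℝ :=
  (∏ i, ν i (block x i)) *
    ((∏ i, S.φ (mass (ν i) (blockSet t x i ∩ {y | f y = true}) / mass (ν i) (blockSet t x i))) *
      Real.exp (-(α * (t.cost x : ℝ))))

noncomputable def prodValue (ν : Fin n → (Fin m → Bool) → ℝ) (t : DTree (Fin n × Fin m) L) : ℝ :=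
  ∑ x, prodTerm S f α ν t x

lemma dScoreN_eq_sum_prodValue (μ : (Fin m → Bool) → ℝ) (R : RandAlg (Fin n × Fin m) L) :
    dScoreN S f μ α R = ∑ j, R.p j * prodValue S f α (fun _ => μ) (R.T j) :=
  rfl

lemma blockSet_node (i₀ : Fin n) (j₀ : Fin m) (t0 t1 : DTree (Fin n × Fin m) L)
    (x : Fin n × Fin m → Bool) (i : Fin n) :
    blockSet (node (i₀, j₀) t0 t1) x i =
      blockSet (if x (i₀, j₀) then t1 else t0) x i ∩
        (if i = i₀ then {y | y j₀ = x (i₀, j₀)} else Set.univ) := by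
  ext y
  by_cases hi : i = i₀
  · subst hi
    cases hxb : x (i, j₀) <;> simp [blockSet, leafSet, hxb, and_comm]
  · cases hxb : x (i₀, j₀) <;> simp [blockSet, leafSet, hxb, Ne.symm hi, hi]

lemma mass_update_indicator (ν : Fin n → (Fin m → Bool) → ℝ) (i₀ : Fin n) (A : Set (Fin m → Bool))
    (i : Fin n) (B : Set (Fin m → Bool)) :
    mass (Function.update ν i₀ (A.indicator (ν i₀)) i) B =
      mass (ν i) (B ∩ if i = i₀ then A else Set.univ) := by
  rcases eq_or_ne i i₀ with rfl | hi
  · rw [Function.update_self, mass_indicator, if_pos rfl]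
  · rw [Function.update_of_ne hi, if_neg hi, Set.inter_univ]

lemma prodValue_prodTree (ν : Fin n → (Fin m → Bool) → ℝ) (t : Fin n → DTree (Fin m) Unit) :
    prodValue S f α ν (prodTree t) = ∏ i, treeValue S f α (ν i) (t i) := by
  have hterm : ∀ x, prodTerm S f α ν (prodTree t) x =
      ∏ i, ν i (block x i) * (leafScore S f (ν i) (t i) (block x i) *
        Real.exp (-(α * ((t i).cost (block x i) : ℝ)))) := by
    intro x
    simp only [prodTerm, cost_prodTree, Nat.cast_sum, mul_sum, ← sum_neg_distrib, Real.exp_sum,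
      blockSet_prodTree, leafScore, prod_mul_distrib]
  rw [prodValue, sum_congr rfl fun x _ => hterm x, sum_prod_block fun i y =>
    ν i y * (leafScore S f (ν i) (t i) y * Real.exp (-(α * ((t i).cost y : ℝ))))]
  rfl

variable {S f α}

lemma prodTerm_node_of_eq {ν : Fin n → (Fin m → Bool) → ℝ} {i₀ : Fin n} {j₀ : Fin m} {b : Bool}
    {x : Fin n × Fin m → Bool} (hb : x (i₀, j₀) = b) (t0 t1 : DTree (Fin n × Fin m) L) :
    prodTerm S f α ν (node (i₀, j₀) t0 t1) x = Real.exp (-α) *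
      prodTerm S f α (Function.update ν i₀ ({y | y j₀ = b}.indicator (ν i₀)))
        (if b then t1 else t0) x := by
  have hweight : ∀ i, Function.update ν i₀ ({y | y j₀ = b}.indicator (ν i₀)) i (block x i) =
      ν i (block x i) := by
    intro i
    rcases eq_or_ne i i₀ with rfl | hi
    · rw [Function.update_self]
      exact Set.indicator_of_mem (s := {y : Fin m → Bool | y j₀ = b}) hb _
    · rw [Function.update_of_ne hi]
  have hscore : ∀ i, mass (ν i) (blockSet (node (i₀, j₀) t0 t1) x i ∩ {y | f y = true}) /
        mass (ν i) (blockSet (node (i₀, j₀) t0 t1) x i) =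
      mass (Function.update ν i₀ ({y | y j₀ = b}.indicator (ν i₀)) i)
          (blockSet (if b then t1 else t0) x i ∩ {y | f y = true}) /
        mass (Function.update ν i₀ ({y | y j₀ = b}.indicator (ν i₀)) i)
          (blockSet (if b then t1 else t0) x i) := by
    intro i
    rw [mass_update_indicator, mass_update_indicator, blockSet_node, Set.inter_right_comm, hb]
  rw [prodTerm, prodTerm, cost_node_of_eq hb, prod_congr rfl fun i _ => hweight i,
    prod_congr rfl fun i _ => congrArg S.φ (hscore i), Nat.cast_succ, mul_add_one, neg_add,
    Real.exp_add]
  ring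

lemma prodTerm_update_indicator_of_ne {ν : Fin n → (Fin m → Bool) → ℝ} {i₀ : Fin n} {j₀ : Fin m}
    {b : Bool} {x : Fin n × Fin m → Bool} (hb : x (i₀, j₀) ≠ b) (t : DTree (Fin n × Fin m) L) :
    prodTerm S f α (Function.update ν i₀ ({y | y j₀ = b}.indicator (ν i₀))) t x = 0 := by
  have hzero : Function.update ν i₀ ({y | y j₀ = b}.indicator (ν i₀)) i₀ (block x i₀) = 0 := by
    rw [Function.update_self]
    exact Set.indicator_of_notMem (s := {y : Fin m → Bool | y j₀ = b}) hb _
  rw [prodTerm, prod_eq_zero (mem_univ i₀) hzero, zero_mul]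

lemma prodValue_node (ν : Fin n → (Fin m → Bool) → ℝ) (i₀ : Fin n) (j₀ : Fin m)
    (t0 t1 : DTree (Fin n × Fin m) L) :
    prodValue S f α ν (node (i₀, j₀) t0 t1) = Real.exp (-α) *
      (prodValue S f α (Function.update ν i₀ ({y | y j₀ = false}.indicator (ν i₀))) t0 +
        prodValue S f α (Function.update ν i₀ ({y | y j₀ = true}.indicator (ν i₀))) t1) := by
  rw [prodValue, prodValue, prodValue, ← sum_add_distrib, mul_sum]
  refine sum_congr rfl fun x _ => ?_
  cases hb : x (i₀, j₀)
  · rw [prodTerm_node_of_eq hb, prodTerm_update_indicator_of_ne (b := true) (by simp [hb]),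
      add_zero]
    rfl
  · rw [prodTerm_node_of_eq hb, prodTerm_update_indicator_of_ne (b := false) (by simp [hb]),
      zero_add]
    rfl

end ProductValue

section ProductBound

open DTree

variable {m n : ℕ} (S : ScoreFun) (f : (Fin m → Bool) → Bool) {α : ℝ}

lemma prod_maxTreeValue_update (ν : Fin n → (Fin m → Bool) → ℝ) (i₀ : Fin n)
    (w : (Fin m → Bool) → ℝ) :
    ∏ i, maxTreeValue S f α (Function.update ν i₀ w i) =
      maxTreeValue S f α w * ∏ i ∈ univ \ {i₀}, maxTreeValue S f α (ν i) :=
  (prod_congr rfl fun i _ => Function.apply_update (fun _ => maxTreeValue S f α) ν i₀ w i).trans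
    (prod_update_of_mem (mem_univ i₀) _ _)

lemma prodValue_le_prod_maxTreeValue (hα : 0 ≤ α) {ν : Fin n → (Fin m → Bool) → ℝ}
    (hν : ∀ i x, 0 ≤ ν i x) (t : DTree (Fin n × Fin m) Unit) :
    prodValue S f α ν t ≤ ∏ i, maxTreeValue S f α (ν i) := by
  induction t generalizing ν with
  | leaf =>
    rw [← prodTree_leaf, prodValue_prodTree]
    exact prod_le_prod (fun i _ => treeValue_nonneg S f α (hν i) _)
      fun i _ => treeValue_le_maxTreeValue S f hα (hν i) _
  | node q t0 t1 ih0 ih1 =>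
    obtain ⟨i₀, j₀⟩ := q
    set E := ∏ i ∈ univ \ {i₀}, maxTreeValue S f α (ν i)
    have hE : 0 ≤ E := prod_nonneg fun i _ => maxTreeValue_nonneg S f hα (hν i)
    have hrestrict : ∀ b : Bool, ∀ i x,
        0 ≤ Function.update ν i₀ ({y | y j₀ = b}.indicator (ν i₀)) i x := by
      intro b i x
      rcases eq_or_ne i i₀ with rfl | hi
      · rw [Function.update_self]
        exact Set.indicator_nonneg (fun y _ => hν i y) x
      · rw [Function.update_of_ne hi]
        exact hν i x
    have h0 := (ih0 (hrestrict false)).trans_eq (prod_maxTreeValue_update S f ν i₀ _)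
    have h1 := (ih1 (hrestrict true)).trans_eq (prod_maxTreeValue_update S f ν i₀ _)
    have hsplit : ∏ i, maxTreeValue S f α (ν i) = maxTreeValue S f α (ν i₀) * E := by
      rw [← prod_maxTreeValue_update, Function.update_eq_self]
    rw [prodValue_node, hsplit]
    calc _ ≤ Real.exp (-α) *
          (maxTreeValue S f α ({y | y j₀ = false}.indicator (ν i₀)) * E +
            maxTreeValue S f α ({y | y j₀ = true}.indicator (ν i₀)) * E) := by
          gcongr
      _ = Real.exp (-α) *
          (maxTreeValue S f α ({y | y j₀ = false}.indicator (ν i₀)) +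
            maxTreeValue S f α ({y | y j₀ = true}.indicator (ν i₀))) * E := by
          ring
      _ ≤ maxTreeValue S f α (ν i₀) * E := mul_le_mul_of_nonneg_right
          (exp_neg_mul_maxTreeValue_indicator_le S f hα (hν i₀) j₀) hE

end ProductBound

theorem tensorization_of_maximum_discounted_score_general
    (m : ℕ) (S : ScoreFun) (X : Set (Fin m → Bool)) (f : (Fin m → Bool) → Bool)
    (μ : InputDist (Fin m) X) (α : ℝ) (hα : 0 ≤ α) (n : ℕ) :
    DSN S f μ.μ α n = (DS S f μ.μ α) ^ n := by
  have hμ : ∀ (_ : Fin n) x, 0 ≤ μ.μ x := fun _ => μ.nonneg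
  have hbound := prodValue_le_prod_maxTreeValue S f hα hμ
  have hDS : DS S f μ.μ α = maxTreeValue S f α μ.μ := by
    simp only [DS, dScore_eq_sum_treeValue]
    exact iSup_randAlg_sum_eq_iSup _ (bddAbove_range_treeValue S f hα μ.nonneg)
  have hDSN : DSN S f μ.μ α n =
      ⨆ t : DTree (Fin n × Fin m) Unit, prodValue S f α (fun _ => μ.μ) t := by
    simp only [DSN, dScoreN_eq_sum_prodValue]
    exact iSup_randAlg_sum_eq_iSup _ ⟨_, Set.forall_mem_range.2 hbound⟩
  rw [hDSN, hDS]
  refine le_antisymm (ciSup_le fun t => (hbound t).trans_eq (Fin.prod_const n _)) ?_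
  rw [maxTreeValue, Real.iSup_pow (treeValue_nonneg S f α μ.nonneg)]
  refine ciSup_le fun t => ?_
  rw [← Fin.prod_const, ← prodValue_prodTree]
  exact le_ciSup ⟨_, Set.forall_mem_range.2 hbound⟩ (DTree.prodTree fun _ => t)

/-- **Tensorization of maximum discounted score** (Lemma: `DS_α^{μⁿ}(fⁿ) = (DS_α^μ(f))ⁿ`). -/
theorem tensorization_of_maximum_discounted_score
    (m : ℕ) (S : ScoreFun) (X : Set (Fin m → Bool)) (f : (Fin m → Bool) → Bool)
    (μ : InputDist (Fin m) X) (α : ℝ) (hα : 0 ≤ α) (n : ℕ) (hn : 1 ≤ n) :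
    DSN S f μ.μ α n = (DS S f μ.μ α) ^ n :=
  tensorization_of_maximum_discounted_score_general m S X f μ α hα n
end

section
/- Equivalence lemma, lower bound: for every score function φ, every (possibly partial) function f : X → {0,1} with X ⊆ {0,1}^m, every probability distribution μ on X, every score parameter γ ∈ (1/2, 1], and every discount factor α > 0, the maximum discounted score satisfies DS_α^μ(f) ≥ γ·exp(−α·sR̄̄_γ^μ(f)); equivalently, sR̄̄_γ^μ(f) ≥ (1/α)·ln(γ / DS_α^μ(f)). -/
open Finset

section Aux

variable {m : ℕ}

lemma aux_mass_nonneg (μ : (Fin m → Bool) → ℝ) (h : ∀ x, 0 ≤ μ x)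
    (T : Set (Fin m → Bool)) : 0 ≤ mass μ T :=
  Finset.sum_nonneg fun x _ => Set.indicator_nonneg (fun y _ => h y) x

lemma aux_mass_inter_le (μ : (Fin m → Bool) → ℝ) (h : ∀ x, 0 ≤ μ x)
    (T U : Set (Fin m → Bool)) : mass μ (T ∩ U) ≤ mass μ T := by
  classical
  refine Finset.sum_le_sum fun x _ => ?_
  by_cases hx : x ∈ T ∩ U
  · rw [Set.indicator_of_mem hx, Set.indicator_of_mem hx.1]
  · rw [Set.indicator_of_notMem hx]
    exact Set.indicator_nonneg (fun y _ => h y) x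

lemma aux_leafScore_mem (S : ScoreFun) (f : (Fin m → Bool) → Bool)
    (μ : (Fin m → Bool) → ℝ) (h : ∀ x, 0 ≤ μ x) (t : DTree (Fin m) Unit)
    (x : Fin m → Bool) : leafScore S f μ t x ∈ Set.Icc (1/2 : ℝ) 1 := by
  have hr : mass μ (t.leafSet x ∩ {y | f y = true}) / mass μ (t.leafSet x)
      ∈ Set.Icc (0:ℝ) 1 := by
    rcases eq_or_lt_of_le (aux_mass_nonneg μ h (t.leafSet x)) with h0 | h0
    · rw [← h0, div_zero]; exact ⟨le_refl _, zero_le_one⟩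
    · exact ⟨div_nonneg (aux_mass_nonneg μ h _) h0.le,
        (div_le_one h0).2 (aux_mass_inter_le μ h _ _)⟩
  exact ⟨S.half_le _ hr, S.le_one _ hr⟩

/-- The full decision tree querying all indices in a list. -/
def fullT (m : ℕ) : List (Fin m) → DTree (Fin m) Unit
  | [] => .leaf ()
  | i :: r => .node i (fullT m r) (fullT m r)

lemma aux_leafSet_fullT (l : List (Fin m)) (x : Fin m → Bool) :
    (fullT m l).leafSet x = {y | ∀ i ∈ l, y i = x i} := by
  induction l with
  | nil => ext y; simp [fullT, DTree.leafSet]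
  | cons i r ih =>
    ext y
    simp only [fullT, DTree.leafSet, ite_self, ih, Set.mem_inter_iff, Set.mem_setOf_eq,
      List.forall_mem_cons]

lemma aux_leafSet_full (x : Fin m → Bool) :
    (fullT m (List.finRange m)).leafSet x = {x} := by
  rw [aux_leafSet_fullT]
  ext y
  simp [funext_iff]

lemma aux_mass_singleton (μ : (Fin m → Bool) → ℝ) (x : Fin m → Bool) :
    mass μ {x} = μ x := by
  classical
  unfold mass
  rw [Finset.sum_eq_single x]
  · simp
  · intro b _ hb; simp [Set.indicator_apply, hb]
  · simp

open Classical in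
lemma aux_mass_singleton_inter (μ : (Fin m → Bool) → ℝ) (x : Fin m → Bool)
    (T : Set (Fin m → Bool)) :
    mass μ ({x} ∩ T) = if x ∈ T then μ x else 0 := by
  classical
  unfold mass
  rw [Finset.sum_eq_single x]
  · simp [Set.indicator_apply]
  · intro b _ hb; simp [Set.indicator_apply, hb]
  · simp

/-- The trivial randomized algorithm consisting of the full decision tree. -/
noncomputable def fullAlg (m : ℕ) : RandAlg (Fin m) Unit where
  k := 1
  p := fun _ => 1
  T := fun _ => fullT m (List.finRange m)
  p_nonneg := fun _ => zero_le_one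
  p_sum := by simp

lemma aux_fullAlg_score {X : Set (Fin m → Bool)} (S : ScoreFun)
    (f : (Fin m → Bool) → Bool) (μ : InputDist (Fin m) X) :
    algScore S f μ.μ (fullAlg m) = 1 := by
  have hls : ∀ x : Fin m → Bool,
      leafScore S f μ.μ (fullT m (List.finRange m)) x = 1 := by
    intro x
    unfold leafScore
    rw [aux_leafSet_full, aux_mass_singleton, aux_mass_singleton_inter]
    by_cases h0 : μ.μ x = 0
    · simp [h0, S.map_zero]
    · by_cases hf : f x = true
      · simp only [Set.mem_setOf_eq, hf, if_true]
        rw [div_self h0, S.map_one]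
      · simp [Set.mem_setOf_eq, hf, S.map_zero]
  unfold algScore fullAlg
  simp only [hls, mul_one]
  simp [μ.sum_one]

lemma aux_dScore_le_one {X : Set (Fin m → Bool)} (S : ScoreFun)
    (f : (Fin m → Bool) → Bool) (μ : InputDist (Fin m) X) (α : ℝ) (hα : 0 ≤ α)
    (R : RandAlg (Fin m) Unit) : dScore S f μ.μ α R ≤ 1 := by
  unfold dScore
  calc ∑ j, R.p j * ∑ x, μ.μ x *
        (leafScore S f μ.μ (R.T j) x * Real.exp (-(α * ((R.T j).cost x : ℝ))))
      ≤ ∑ j, R.p j * ∑ x, μ.μ x * 1 := by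
        refine Finset.sum_le_sum fun j _ => mul_le_mul_of_nonneg_left
          (Finset.sum_le_sum fun x _ => mul_le_mul_of_nonneg_left ?_ (μ.nonneg x))
          (R.p_nonneg j)
        have hl := aux_leafScore_mem S f μ.μ μ.nonneg (R.T j) x
        have he : Real.exp (-(α * ((R.T j).cost x : ℝ))) ≤ 1 := by
          rw [Real.exp_le_one_iff]
          exact neg_nonpos_of_nonneg (mul_nonneg hα (Nat.cast_nonneg _))
        calc leafScore S f μ.μ (R.T j) x * Real.exp (-(α * ((R.T j).cost x : ℝ)))
            ≤ leafScore S f μ.μ (R.T j) x * 1 :=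
              mul_le_mul_of_nonneg_left he (le_trans (by norm_num) hl.1)
          _ ≤ 1 := by rw [mul_one]; exact hl.2
    _ = 1 := by simp [μ.sum_one, R.p_sum]

lemma aux_key {X : Set (Fin m → Bool)} (S : ScoreFun)
    (f : (Fin m → Bool) → Bool) (μ : InputDist (Fin m) X) (γ α : ℝ)
    (hγ : 1 / 2 < γ) (hα : 0 < α) (R : RandAlg (Fin m) Unit)
    (hR : γ ≤ algScore S f μ.μ R) :
    γ * Real.exp (-(α * scost S f μ.μ R)) ≤ dScore S f μ.μ α R := by
  classical
  set s : Fin R.k × (Fin m → Bool) → ℝ :=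
    fun q => leafScore S f μ.μ (R.T q.1) q.2 with hs
  set c : Fin R.k × (Fin m → Bool) → ℝ :=
    fun q => ((R.T q.1).cost q.2 : ℝ) with hc
  set W : Fin R.k × (Fin m → Bool) → ℝ :=
    fun q => R.p q.1 * μ.μ q.2 * s q with hWdef
  have hW : ∀ q, 0 ≤ W q := fun q =>
    mul_nonneg (mul_nonneg (R.p_nonneg _) (μ.nonneg _))
      (le_trans (by norm_num) (aux_leafScore_mem S f μ.μ μ.nonneg _ _).1)
  have hAlg : algScore S f μ.μ R = ∑ q, W q := by
    unfold algScore
    rw [Fintype.sum_prod_type]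
    exact Finset.sum_congr rfl fun j _ => by
      rw [Finset.mul_sum]
      exact Finset.sum_congr rfl fun x _ => by simp [hWdef, hs]; ring
  have hNum : (∑ j, R.p j * ∑ x, μ.μ x *
      (leafScore S f μ.μ (R.T j) x * ((R.T j).cost x : ℝ))) = ∑ q, W q * c q := by
    rw [Fintype.sum_prod_type]
    exact Finset.sum_congr rfl fun j _ => by
      rw [Finset.mul_sum]
      exact Finset.sum_congr rfl fun x _ => by simp [hWdef, hs, hc]; ring
  have hD : dScore S f μ.μ α R = ∑ q, W q * Real.exp (-(α * c q)) := by
    unfold dScore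
    rw [Fintype.sum_prod_type]
    exact Finset.sum_congr rfl fun j _ => by
      rw [Finset.mul_sum]
      exact Finset.sum_congr rfl fun x _ => by simp [hWdef, hs, hc]; ring
  have hSum : 0 < ∑ q, W q := lt_of_lt_of_le (lt_trans (by norm_num) hγ) (hAlg ▸ hR)
  have hJ := convexOn_exp.map_centerMass_le (t := Finset.univ) (w := W)
    (p := fun q => -(α * c q)) (fun i _ => hW i) hSum (fun i _ => Set.mem_univ _)
  simp only [Finset.centerMass, smul_eq_mul, Function.comp] at hJ
  have hscost : scost S f μ.μ R = (∑ q, W q * c q) / (∑ q, W q) := by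
    unfold scost; rw [hNum, hAlg]
  have harg : (∑ q, W q)⁻¹ * ∑ q, W q * (-(α * c q)) = -(α * scost S f μ.μ R) := by
    rw [hscost, show ∑ q, W q * (-(α * c q)) = (-α) * ∑ q, W q * c q from by
      rw [Finset.mul_sum]; exact Finset.sum_congr rfl fun q _ => by ring,
      div_eq_mul_inv]
    ring
  rw [harg] at hJ
  rw [hD]
  calc γ * Real.exp (-(α * scost S f μ.μ R))
      ≤ (∑ q, W q) * Real.exp (-(α * scost S f μ.μ R)) :=
        mul_le_mul_of_nonneg_right (hAlg ▸ hR) (Real.exp_pos _).le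
    _ ≤ (∑ q, W q) * ((∑ q, W q)⁻¹ * ∑ q, W q * Real.exp (-(α * c q))) :=
        mul_le_mul_of_nonneg_left hJ hSum.le
    _ = ∑ q, W q * Real.exp (-(α * c q)) := by
        rw [← mul_assoc, mul_inv_cancel₀ hSum.ne', one_mul]

end Aux

/-- **Equivalence lemma, lower bound**: `DS_α^μ(f) ≥ γ·exp(−α·sR̄̄_γ^μ(f))`. -/
theorem equivalence_lemma_lower_bound
    (m : ℕ) (S : ScoreFun) (X : Set (Fin m → Bool)) (f : (Fin m → Bool) → Bool)
    (μ : InputDist (Fin m) X) (γ : ℝ) (hγ1 : 1 / 2 < γ) (hγ2 : γ ≤ 1)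
    (α : ℝ) (hα : 0 < α) :
    γ * Real.exp (-(α * sRdist S f μ.μ γ)) ≤ DS S f μ.μ α := by
  classical
  have hbdd : BddAbove (Set.range fun R : RandAlg (Fin m) Unit => dScore S f μ.μ α R) :=
    ⟨1, by rintro _ ⟨R, rfl⟩; exact aux_dScore_le_one S f μ α hα.le R⟩
  set A := {c | ∃ R : RandAlg (Fin m) Unit,
    γ ≤ algScore S f μ.μ R ∧ scost S f μ.μ R = c} with hA
  have hne : A.Nonempty :=
    ⟨scost S f μ.μ (fullAlg m), fullAlg m, by rw [aux_fullAlg_score]; exact hγ2, rfl⟩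
  have hbb : BddBelow A := by
    refine ⟨0, ?_⟩
    rintro c ⟨R, hR, rfl⟩
    have halg : 0 < algScore S f μ.μ R := lt_of_lt_of_le (by linarith) hR
    exact div_nonneg (Finset.sum_nonneg fun j _ => mul_nonneg (R.p_nonneg j)
      (Finset.sum_nonneg fun x _ => mul_nonneg (μ.nonneg x)
        (mul_nonneg (le_trans (by norm_num) (aux_leafScore_mem S f μ.μ μ.nonneg _ _).1)
          (Nat.cast_nonneg _)))) halg.le
  have hsub : A ⊆ {c : ℝ | γ * Real.exp (-(α * c)) ≤ DS S f μ.μ α} := by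
    rintro c ⟨R, hR, rfl⟩
    exact le_trans (aux_key S f μ γ α hγ1 hα R hR) (le_ciSup hbdd R)
  have hclosed : IsClosed {c : ℝ | γ * Real.exp (-(α * c)) ≤ DS S f μ.μ α} :=
    isClosed_le (by fun_prop) continuous_const
  have hmem : sInf A ∈ {c : ℝ | γ * Real.exp (-(α * c)) ≤ DS S f μ.μ α} :=
    hclosed.closure_subset_iff.2 hsub (csInf_mem_closure hne hbb)
  exact hmem
end
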